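/- arXiv:2004.03063 — 3 statements merged into one kernel-verified Lean document; each statement's English description precedes it below -/
import Mathlib

section
/- If a convex region S in the plane contains a rectangle of width v and height u (with sides parallel to the axes), and also contains points Y1 below the rectangle and Y2 such that the vertical distance between Y1 and Y2 exceeds u, then the area of S is at least u·v + (v/2)·((y-coordinate of Y2 minus y-coordinate of Y1) − u). -/
open MeasureTheory Set

/-- The open "cone" with apex `(p, q)` over the horizontal segment from
`(x1, c)` to `(x1 + v, c)`. -/
def cone (p q x1 c v : ℝ) : Set (ℝ × ℝ) :=
  {z : ℝ × ℝ | z.2 ∈ Set.uIoo q c ∧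
    z.1 ∈ Set.Ioo (p + (z.2 - q) / (c - q) * (x1 - p))
      (p + (z.2 - q) / (c - q) * (x1 + v - p))}

lemma measSet_uIoo {q c : ℝ} : MeasurableSet (Set.uIoo q c) := by
  rcases le_total q c with h | h
  · rw [Set.uIoo_of_le h]; exact measurableSet_Ioo
  · rw [Set.uIoo_of_ge h]; exact measurableSet_Ioo

lemma cone_measurable (p q x1 c v : ℝ) : MeasurableSet (cone p q x1 c v) := by
  have h1 : MeasurableSet {z : ℝ × ℝ | z.2 ∈ Set.uIoo q c} :=
    measurable_snd measSet_uIoo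
  have h2 : MeasurableSet {z : ℝ × ℝ | p + (z.2 - q) / (c - q) * (x1 - p) < z.1} :=
    measurableSet_lt (by fun_prop) measurable_fst
  have h3 : MeasurableSet {z : ℝ × ℝ | z.1 < p + (z.2 - q) / (c - q) * (x1 + v - p)} :=
    measurableSet_lt measurable_fst (by fun_prop)
  have : cone p q x1 c v =
      {z : ℝ × ℝ | z.2 ∈ Set.uIoo q c} ∩
        ({z : ℝ × ℝ | p + (z.2 - q) / (c - q) * (x1 - p) < z.1} ∩
          {z : ℝ × ℝ | z.1 < p + (z.2 - q) / (c - q) * (x1 + v - p)}) := by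
    ext z; simp [cone, Set.mem_Ioo, and_assoc]
  rw [this]
  exact h1.inter (h2.inter h3)

lemma cone_slice_vol (p q x1 c v : ℝ) (y : ℝ) :
    volume ((fun x => (x, y)) ⁻¹' cone p q x1 c v) =
      (Set.uIoo q c).indicator (fun y => ENNReal.ofReal ((y - q) / (c - q) * v)) y := by
  by_cases hy : y ∈ Set.uIoo q c
  · rw [Set.indicator_of_mem hy]
    have h : (fun x => (x, y)) ⁻¹' cone p q x1 c v =
        Set.Ioo (p + (y - q) / (c - q) * (x1 - p)) (p + (y - q) / (c - q) * (x1 + v - p)) := by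
      ext x; simp [cone, hy]
    rw [h, Real.volume_Ioo]
    congr 1
    ring
  · rw [Set.indicator_of_notMem hy]
    have h : (fun x => (x, y)) ⁻¹' cone p q x1 c v = ∅ := by
      ext x; simp [cone, hy]
    simp [h]

lemma cone_volume (p q x1 c v : ℝ) (hv : 0 < v) :
    volume (cone p q x1 c v) = ENNReal.ofReal (v * |c - q| / 2) := by
  rw [MeasureTheory.Measure.volume_eq_prod,
    MeasureTheory.Measure.prod_apply_symm (cone_measurable p q x1 c v)]
  simp_rw [cone_slice_vol]
  rw [lintegral_indicator measSet_uIoo]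
  rcases lt_trichotomy q c with h | h | h
  · rw [Set.uIoo_of_lt h]
    have hint : IntegrableOn (fun y => (y - q) / (c - q) * v) (Set.Ioo q c) := by
      apply (Continuous.integrableOn_Icc (by fun_prop)).mono_set Set.Ioo_subset_Icc_self
    have hpos : 0 ≤ᶠ[ae (volume.restrict (Set.Ioo q c))] fun y => (y - q) / (c - q) * v := by
      rw [Filter.EventuallyLE, ae_restrict_iff' measurableSet_Ioo]
      filter_upwards with y hy
      simp only [Pi.zero_apply]
      have h1 : 0 ≤ y - q := by linarith [hy.1]
      have h2 : 0 ≤ c - q := by linarith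
      positivity
    rw [← MeasureTheory.ofReal_integral_eq_lintegral_ofReal hint hpos]
    congr 1
    rw [← MeasureTheory.integral_Ioc_eq_integral_Ioo, ← intervalIntegral.integral_of_le h.le]
    have heq : (fun y : ℝ => (y - q) / (c - q) * v) = fun y => (y - q) * (v / (c - q)) := by
      funext y; ring
    rw [heq]
    rw [intervalIntegral.integral_comp_sub_right (fun t => t * (v / (c - q))) q]
    rw [intervalIntegral.integral_mul_const, integral_id]
    rw [abs_of_pos (sub_pos.2 h)]
    have hcq : c - q ≠ 0 := sub_ne_zero.2 h.ne'
    field_simp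
    ring
  · subst h
    simp [Set.uIoo_self]
  · rw [Set.uIoo_of_gt h]
    have hint : IntegrableOn (fun y => (y - q) / (c - q) * v) (Set.Ioo c q) := by
      apply (Continuous.integrableOn_Icc (by fun_prop)).mono_set Set.Ioo_subset_Icc_self
    have hpos : 0 ≤ᶠ[ae (volume.restrict (Set.Ioo c q))] fun y => (y - q) / (c - q) * v := by
      rw [Filter.EventuallyLE, ae_restrict_iff' measurableSet_Ioo]
      filter_upwards with y hy
      simp only [Pi.zero_apply]
      have h1 : y - q < 0 := by linarith [hy.2]
      have h2 : c - q < 0 := by linarith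
      have : 0 ≤ (y - q) / (c - q) := by
        rw [div_nonneg_iff]; right; exact ⟨h1.le, h2.le⟩
      positivity
    rw [← MeasureTheory.ofReal_integral_eq_lintegral_ofReal hint hpos]
    congr 1
    rw [← MeasureTheory.integral_Ioc_eq_integral_Ioo, ← intervalIntegral.integral_of_le h.le]
    have heq : (fun y : ℝ => (y - q) / (c - q) * v) = fun y => (y - q) * (v / (c - q)) := by
      funext y; ring
    rw [heq]
    rw [intervalIntegral.integral_comp_sub_right (fun t => t * (v / (c - q))) q]
    rw [intervalIntegral.integral_mul_const, integral_id]
    rw [abs_of_neg (sub_neg.2 h)]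
    have hcq : c - q ≠ 0 := by intro h'; linarith [sub_eq_zero.1 h']
    field_simp
    ring
  
lemma cone_subset {S : Set (ℝ × ℝ)} (hS : Convex ℝ S) {p q x1 c v : ℝ} (hv : 0 < v)
    (hp : (p, q) ∈ S) (h1 : (x1, c) ∈ S) (h2 : (x1 + v, c) ∈ S) :
    cone p q x1 c v ⊆ S := by
  rintro ⟨x, y⟩ ⟨hy, hx⟩
  simp only at hx hy
  set t := (y - q) / (c - q) with htdef
  have ht0 : 0 < t := by
    rcases lt_or_ge q c with h | h
    · rw [Set.uIoo_of_lt h] at hy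
      exact div_pos (by linarith [hy.1]) (by linarith)
    · have h' : c < q := by
        rcases lt_or_eq_of_le h with h' | h'
        · exact h'
        · subst h'; simp [Set.uIoo_self] at hy
      rw [Set.uIoo_of_gt h'] at hy
      have : t = (q - y) / (q - c) := by
        rw [htdef, ← neg_div_neg_eq]; ring_nf
      rw [this]
      exact div_pos (by linarith [hy.2]) (by linarith)
  have ht1 : t < 1 := by
    rcases lt_or_ge q c with h | h
    · rw [Set.uIoo_of_lt h] at hy
      rw [htdef, div_lt_one (by linarith)]
      linarith [hy.2]
    · have h' : c < q := by
        rcases lt_or_eq_of_le h with h' | h'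
        · exact h'
        · subst h'; simp [Set.uIoo_self] at hy
      rw [Set.uIoo_of_gt h'] at hy
      have heq : t = (q - y) / (q - c) := by
        rw [htdef, ← neg_div_neg_eq]; ring_nf
      rw [heq, div_lt_one (by linarith)]
      linarith [hy.1]
  set w : ℝ := p + (x - p) / t with hwdef
  have hw1 : x1 < w := by
    have := hx.1
    have h' : t * (x1 - p) < x - p := by linarith
    have := (lt_div_iff₀' ht0).2 h'
    rw [hwdef]; linarith
  have hw2 : w < x1 + v := by
    have := hx.2
    have h' : x - p < t * (x1 + v - p) := by linarith
    have := (div_lt_iff₀' ht0).2 h'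
    rw [hwdef]; linarith
  have hwmem : ((w, c) : ℝ × ℝ) ∈ S := by
    have hs0 : (0:ℝ) ≤ (w - x1) / v := div_nonneg (by linarith) hv.le
    have hs1 : (w - x1) / v ≤ 1 := (div_le_one hv).2 (by linarith)
    have hmem := hS h1 h2 (by linarith : (0:ℝ) ≤ 1 - (w - x1) / v) hs0 (by ring)
    have heq : (1 - (w - x1) / v) • ((x1, c) : ℝ × ℝ) + ((w - x1) / v) • ((x1 + v, c) : ℝ × ℝ)
        = (w, c) := by
      have hvne : v ≠ 0 := hv.ne'
      simp only [Prod.smul_mk, Prod.mk_add_mk, smul_eq_mul, Prod.mk.injEq]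
      constructor
      · field_simp
        ring
      · ring
    rwa [heq] at hmem
  have hmem := hS hp hwmem (by linarith : (0:ℝ) ≤ 1 - t) ht0.le (by ring)
  have heq : (1 - t) • ((p, q) : ℝ × ℝ) + t • ((w, c) : ℝ × ℝ) = (x, y) := by
    have htne : t ≠ 0 := ht0.ne'
    have hy2 : (1 - t) * q + t * c = y := by
      have hcq : c - q ≠ 0 := by
        intro h'
        rw [htdef, h', div_zero] at ht0
        exact lt_irrefl 0 ht0
      rw [htdef]
      field_simp
      ring
    simp only [Prod.smul_mk, Prod.mk_add_mk, smul_eq_mul, Prod.mk.injEq]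
    constructor
    · rw [hwdef]
      field_simp
      ring
    · exact hy2
  rwa [heq] at hmem

/-- If a convex region `S` in the plane contains the axis-aligned rectangle
`[a, a+v] × [b, b+u]`, a point `Y1 = (p1, q1)` below the rectangle, and a point
`Y2 = (p2, q2)` with `q2 - q1 > u`, then the area of `S` is at least
`u·v + (v/2)·((q2 - q1) - u)`. -/
theorem stmt_0 (S : Set (ℝ × ℝ)) (hS : Convex ℝ S)
    (a b u v p1 q1 p2 q2 : ℝ) (hu : 0 < u) (hv : 0 < v)
    (hrect : Icc a (a + v) ×ˢ Icc b (b + u) ⊆ S)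
    (hY1 : (p1, q1) ∈ S) (hq1 : q1 ≤ b)
    (hY2 : (p2, q2) ∈ S) (hgap : u < q2 - q1) :
    ENNReal.ofReal (u * v + (v / 2) * ((q2 - q1) - u)) ≤ volume S := by
  have hab : ((a, b) : ℝ × ℝ) ∈ S :=
    hrect (Set.mk_mem_prod (Set.mem_Icc.2 ⟨by linarith, by linarith⟩)
      (Set.mem_Icc.2 ⟨by linarith, by linarith⟩))
  have havb : ((a + v, b) : ℝ × ℝ) ∈ S :=
    hrect (Set.mk_mem_prod (Set.mem_Icc.2 ⟨by linarith, by linarith⟩)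
      (Set.mem_Icc.2 ⟨by linarith, by linarith⟩))
  have habu : ((a, b + u) : ℝ × ℝ) ∈ S :=
    hrect (Set.mk_mem_prod (Set.mem_Icc.2 ⟨by linarith, by linarith⟩)
      (Set.mem_Icc.2 ⟨by linarith, by linarith⟩))
  have havbu : ((a + v, b + u) : ℝ × ℝ) ∈ S :=
    hrect (Set.mk_mem_prod (Set.mem_Icc.2 ⟨by linarith, by linarith⟩)
      (Set.mem_Icc.2 ⟨by linarith, by linarith⟩))
  set R0 : Set (ℝ × ℝ) := Set.Ioo a (a + v) ×ˢ Set.Ioo b (b + u) with hR0def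
  have hR0S : R0 ⊆ S :=
    subset_trans (Set.prod_mono Set.Ioo_subset_Icc_self Set.Ioo_subset_Icc_self) hrect
  have hR0meas : MeasurableSet R0 := measurableSet_Ioo.prod measurableSet_Ioo
  have hR0vol : volume R0 = ENNReal.ofReal (u * v) := by
    rw [hR0def, MeasureTheory.Measure.volume_eq_prod, MeasureTheory.Measure.prod_prod,
      Real.volume_Ioo, Real.volume_Ioo, add_sub_cancel_left, add_sub_cancel_left,
      ← ENNReal.ofReal_mul hv.le, mul_comm]
  set T1 : Set (ℝ × ℝ) := cone p1 q1 a b v with hT1def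
  have hT1S : T1 ⊆ S := cone_subset hS hv hY1 hab havb
  have hT1vol : volume T1 = ENNReal.ofReal (v * (b - q1) / 2) := by
    rw [hT1def, cone_volume p1 q1 a b v hv, abs_of_nonneg (by linarith : (0:ℝ) ≤ b - q1)]
  have hT1snd : ∀ z ∈ T1, z.2 < b := by
    intro z hz
    have := hz.1
    rcases lt_or_eq_of_le hq1 with h | h
    · rw [Set.uIoo_of_lt h] at this; exact this.2
    · rw [← h] at this; simp [Set.uIoo_self] at this
  have hdisj1 : Disjoint T1 R0 := by
    rw [Set.disjoint_left]
    intro z hz hz'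
    exact absurd (hz'.2.1) (not_lt.2 (hT1snd z hz).le)
  rcases le_or_gt q2 (b + u) with hc | hc
  · -- q2 ≤ b + u : use T1 ∪ R0
    have hle : volume (T1 ∪ R0) ≤ volume S :=
      measure_mono (Set.union_subset hT1S hR0S)
    rw [measure_union hdisj1 hR0meas, hT1vol, hR0vol] at hle
    refine le_trans ?_ hle
    have h1 : (0:ℝ) ≤ v * (b - q1) / 2 :=
      div_nonneg (mul_nonneg hv.le (by linarith)) (by norm_num)
    rw [← ENNReal.ofReal_add h1 (by positivity)]
    exact ENNReal.ofReal_le_ofReal (by nlinarith [hv.le])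
  · -- b + u < q2 : use T1 ∪ R0 ∪ T2
    set T2 : Set (ℝ × ℝ) := cone p2 q2 a (b + u) v with hT2def
    have hT2S : T2 ⊆ S := cone_subset hS hv hY2 habu havbu
    have hT2vol : volume T2 = ENNReal.ofReal (v * (q2 - (b + u)) / 2) := by
      rw [hT2def, cone_volume p2 q2 a (b + u) v hv,
        abs_of_neg (by linarith : b + u - q2 < 0)]
      congr 1
      ring
    have hT2snd : ∀ z ∈ T2, b + u < z.2 := by
      intro z hz
      have := hz.1
      rw [Set.uIoo_of_gt hc] at this
      exact this.1
    have hdisj2 : Disjoint (T1 ∪ R0) T2 := by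
      rw [Set.disjoint_left]
      rintro z (hz | hz) hz'
      · exact absurd (hT2snd z hz') (not_lt.2 (by linarith [hT1snd z hz]))
      · exact absurd (hT2snd z hz') (not_lt.2 hz.2.2.le)
    have hle : volume (T1 ∪ R0 ∪ T2) ≤ volume S :=
      measure_mono (Set.union_subset (Set.union_subset hT1S hR0S) hT2S)
    rw [measure_union hdisj2 (cone_measurable p2 q2 a (b + u) v),
      measure_union hdisj1 hR0meas, hT1vol, hR0vol, hT2vol] at hle
    refine le_trans ?_ hle
    have h1 : (0:ℝ) ≤ v * (b - q1) / 2 :=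
      div_nonneg (mul_nonneg hv.le (by linarith)) (by norm_num)
    have h2 : (0:ℝ) ≤ v * (q2 - (b + u)) / 2 :=
      div_nonneg (mul_nonneg hv.le (by linarith)) (by norm_num)
    rw [← ENNReal.ofReal_add h1 (by positivity), ← ENNReal.ofReal_add (by positivity) h2]
    exact ENNReal.ofReal_le_ofReal (by nlinarith [hv.le])
end

section
/- For a fixed convex body K in the plane and a fixed convex body K', the function φ(w) = area of the convex hull of K ∪ (K' + w) is a convex function of the translation vector w ∈ ℝ². -/
/-!
Fix `w₁, w₂` and `a + b = 1`, and write `H w` for the hull of `K ∪ (K' + w)`. A point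
`α k + β (k' + a w₁ + b w₂)` of `H (a w₁ + b w₂)` is the combination `a p + b q` of
`p = α k + β (k' + w₁) ∈ H w₁` and `q = α k + β (k' + w₂) ∈ H w₂`, and `p`, `q` lie on its line
parallel to `w₂ - w₁`. So every chord of `H (a w₁ + b w₂)` in that direction lies in `a • I + b • J`
for the corresponding chords `I`, `J` of `H w₁`, `H w₂`, an interval of length `a |I| + b |J|`.
Integrating the chord lengths (Fubini, after a linear change of coordinates making `w₂ - w₁`
vertical) gives `area H (a w₁ + b w₂) ≤ a area H w₁ + b area H w₂`.
-/

open MeasureTheory Measure Set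
open scoped Pointwise

theorem IsCompact.convexJoin {E : Type*} [AddCommGroup E] [Module ℝ E] [TopologicalSpace E]
    [IsTopologicalAddGroup E] [ContinuousSMul ℝ E] {s t : Set E}
    (hs : IsCompact s) (ht : IsCompact t) : IsCompact (_root_.convexJoin ℝ s t) := by
  have : _root_.convexJoin ℝ s t =
      (fun p : ℝ × E × E => (1 - p.1) • p.2.1 + p.1 • p.2.2) '' Icc 0 1 ×ˢ s ×ˢ t := by
    ext z
    simp only [mem_convexJoin, segment_eq_image, mem_image, mem_prod, Prod.exists]
    aesop
  rw [this]
  exact (isCompact_Icc.prod (hs.prod ht)).image (by fun_prop)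

theorem IsCompact.convexHull_union {E : Type*} [AddCommGroup E] [Module ℝ E]
    [TopologicalSpace E] [IsTopologicalAddGroup E] [ContinuousSMul ℝ E] {s t : Set E}
    (hs : IsCompact s) (ht : IsCompact t) (hsc : Convex ℝ s) (htc : Convex ℝ t) :
    IsCompact (convexHull ℝ (s ∪ t)) := by
  rcases s.eq_empty_or_nonempty with rfl | hs₀
  · simpa [htc.convexHull_eq] using ht
  rcases t.eq_empty_or_nonempty with rfl | ht₀
  · simpa [hsc.convexHull_eq] using hs
  rw [hsc.convexHull_union htc hs₀ ht₀]
  exact hs.convexJoin ht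

theorem IsCompact.preimage_prodMk {X Y : Type*} [TopologicalSpace X] [TopologicalSpace Y]
    [T2Space X] [T2Space Y] {A : Set (X × Y)} (hA : IsCompact A) (x : X) :
    IsCompact (Prod.mk x ⁻¹' A) :=
  (hA.image continuous_snd).of_isClosed_subset
    (hA.isClosed.preimage (Continuous.prodMk_right x)) fun y hy => ⟨(x, y), hy, rfl⟩

theorem Convex.preimage_prodMk {𝕜 X Y : Type*} [Semiring 𝕜] [PartialOrder 𝕜] [AddCommMonoid X]
    [Module 𝕜 X] [AddCommMonoid Y] [Module 𝕜 Y] {A : Set (X × Y)} (hA : Convex 𝕜 A) (x : X) :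
    Convex 𝕜 (Prod.mk x ⁻¹' A) := by
  intro y₁ hy₁ y₂ hy₂ a b ha hb hab
  simpa [Prod.smul_mk, Prod.mk_add_mk, ← add_smul, hab] using hA hy₁ hy₂ ha hb hab

theorem exists_sub_smul_mem_convexHull_union_image_add {E : Type*} [AddCommGroup E]
    [Module ℝ E] (K K' : Set E) (w₁ w₂ : E) {a b : ℝ} (hab : a + b = 1) {z : E}
    (hz : z ∈ convexHull ℝ (K ∪ (fun x => x + (a • w₁ + b • w₂)) '' K')) :
    ∃ r : ℝ, z - (b * r) • (w₂ - w₁) ∈ convexHull ℝ (K ∪ (fun x => x + w₁) '' K') ∧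
      z + (a * r) • (w₂ - w₁) ∈ convexHull ℝ (K ∪ (fun x => x + w₂) '' K') := by
  set H : E → Set E := fun w => convexHull ℝ (K ∪ (fun x => x + w) '' K')
  have hconvex : Convex ℝ {z | ∃ r : ℝ, z - (b * r) • (w₂ - w₁) ∈ H w₁ ∧
      z + (a * r) • (w₂ - w₁) ∈ H w₂} := by
    rintro z₁ ⟨r₁, h₁, h₁'⟩ z₂ ⟨r₂, h₂, h₂'⟩ α β hα hβ hαβ
    refine ⟨α * r₁ + β * r₂, ?_, ?_⟩
    · convert convex_convexHull ℝ _ h₁ h₂ hα hβ hαβ using 1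
      module
    · convert convex_convexHull ℝ _ h₁' h₂' hα hβ hαβ using 1
      module
  refine convexHull_min (union_subset (fun k hk => ?_) ?_) hconvex hz
  · exact ⟨0, by simpa using subset_convexHull ℝ _ (mem_union_left _ hk),
      by simpa using subset_convexHull ℝ _ (mem_union_left _ hk)⟩
  rintro _ ⟨k, hk, rfl⟩
  obtain rfl : a = 1 - b := eq_sub_of_add_eq hab
  refine ⟨1, ?_, ?_⟩
  · convert subset_convexHull ℝ _ (mem_union_right K (mem_image_of_mem (· + w₁) hk)) using 1
    module
  · convert subset_convexHull ℝ _ (mem_union_right K (mem_image_of_mem (· + w₂) hk)) using 1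
    module

theorem Real.volume_smul_add_smul_le {s t : Set ℝ} (hs : IsCompact s) (hsc : Convex ℝ s)
    (ht : IsCompact t) (htc : Convex ℝ t) {a b : ℝ} (ha : 0 ≤ a) (hb : 0 ≤ b) :
    volume (a • s + b • t) ≤ ENNReal.ofReal a * volume s + ENNReal.ofReal b * volume t := by
  rcases s.eq_empty_or_nonempty with rfl | hs₀
  · simp
  rcases t.eq_empty_or_nonempty with rfl | ht₀
  · simp
  obtain ⟨p, q, rfl⟩ : ∃ p q, s = Icc p q :=
    ⟨_, _, eq_Icc_of_connected_compact ⟨hs₀, hsc.isPreconnected⟩ hs⟩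
  obtain ⟨p', q', rfl⟩ : ∃ p q, t = Icc p q :=
    ⟨_, _, eq_Icc_of_connected_compact ⟨ht₀, htc.isPreconnected⟩ ht⟩
  have hpq : p ≤ q := nonempty_Icc.1 hs₀
  have hpq' : p' ≤ q' := nonempty_Icc.1 ht₀
  have hsub : a • Icc p q + b • Icc p' q' ⊆ Icc (a * p + b * p') (a * q + b * q') := by
    rintro _ ⟨_, ⟨y, hy, rfl⟩, _, ⟨y', hy', rfl⟩, rfl⟩
    simp only [smul_eq_mul, mem_Icc] at hy hy' ⊢
    constructor <;> nlinarith
  calc volume (a • Icc p q + b • Icc p' q')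
      ≤ ENNReal.ofReal (a * (q - p) + b * (q' - p')) := by
        refine (measure_mono hsub).trans_eq ?_
        rw [Real.volume_Icc]
        ring_nf
    _ = _ := by
        rw [ENNReal.ofReal_add (by positivity) (by positivity), ENNReal.ofReal_mul ha,
          ENNReal.ofReal_mul hb, Real.volume_Icc, Real.volume_Icc]

theorem prod_volume_le_of_forall_preimage_prodMk_subset {X : Type*} [MeasurableSpace X]
    (μ : Measure X) {D A B : Set (X × ℝ)} (hD : MeasurableSet D) (hA : MeasurableSet A)
    (hB : MeasurableSet B) (hAs : ∀ x, IsCompact (Prod.mk x ⁻¹' A))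
    (hAc : ∀ x, Convex ℝ (Prod.mk x ⁻¹' A)) (hBs : ∀ x, IsCompact (Prod.mk x ⁻¹' B))
    (hBc : ∀ x, Convex ℝ (Prod.mk x ⁻¹' B)) {a b : ℝ} (ha : 0 ≤ a) (hb : 0 ≤ b)
    (hDAB : ∀ x, Prod.mk x ⁻¹' D ⊆ a • Prod.mk x ⁻¹' A + b • Prod.mk x ⁻¹' B) :
    μ.prod volume D ≤
      ENNReal.ofReal a * μ.prod volume A + ENNReal.ofReal b * μ.prod volume B := by
  rw [prod_apply hD, prod_apply hA, prod_apply hB, ← lintegral_const_mul _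
    (measurable_measure_prodMk_left hA), ← lintegral_const_mul _
    (measurable_measure_prodMk_left hB), ← lintegral_add_left
    ((measurable_measure_prodMk_left hA).const_mul _)]
  exact lintegral_mono fun x => (measure_mono (hDAB x)).trans
    (Real.volume_smul_add_smul_le (hAs x) (hAc x) (hBs x) (hBc x) ha hb)

theorem addHaar_le_of_forall_exists_sub_smul_mem {E : Type*} [NormedAddCommGroup E]
    [NormedSpace ℝ E] [FiniteDimensional ℝ E] [MeasurableSpace E] [BorelSpace E]
    (μ : Measure E) [μ.IsAddHaarMeasure] {u : E} (hu : u ≠ 0) {D A B : Set E}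
    (hD : MeasurableSet D) (hA : IsCompact A) (hAc : Convex ℝ A) (hB : IsCompact B)
    (hBc : Convex ℝ B) {a b : ℝ} (ha : 0 ≤ a) (hb : 0 ≤ b) (hab : a + b = 1)
    (hDAB : ∀ z ∈ D, ∃ r : ℝ, z - (b * r) • u ∈ A ∧ z + (a * r) • u ∈ B) :
    μ D ≤ ENNReal.ofReal a * μ A + ENNReal.ofReal b * μ B := by
  obtain ⟨F, hF⟩ := Submodule.exists_isCompl (ℝ ∙ u)
  let L : (F × ℝ) ≃L[ℝ] E := ((LinearEquiv.refl ℝ F).prodCongr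
    (LinearEquiv.toSpanNonzeroSingleton ℝ E u hu) ≪≫ₗ
      Submodule.prodEquivOfIsCompl F (ℝ ∙ u) hF.symm).toContinuousLinearEquiv
  have hL : ∀ p : F × ℝ, L p = p.1 + p.2 • u := fun p => rfl
  let ν : Measure (F × ℝ) := addHaar.prod volume
  have hν : ν.map L D ≤ ENNReal.ofReal a * ν.map L A + ENNReal.ofReal b * ν.map L B := by
    rw [map_apply L.continuous.measurable hD, map_apply L.continuous.measurable
      hA.measurableSet, map_apply L.continuous.measurable hB.measurableSet]
    have hA' : IsCompact (L ⁻¹' A) := L.toHomeomorph.isCompact_preimage.2 hA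
    have hB' : IsCompact (L ⁻¹' B) := L.toHomeomorph.isCompact_preimage.2 hB
    refine prod_volume_le_of_forall_preimage_prodMk_subset _
      (hD.preimage L.continuous.measurable) hA'.measurableSet hB'.measurableSet
      hA'.preimage_prodMk (hAc.linear_preimage L.toLinearMap).preimage_prodMk
      hB'.preimage_prodMk (hBc.linear_preimage L.toLinearMap).preimage_prodMk ha hb
      fun x y hy => ?_
    obtain ⟨r, hrA, hrB⟩ := hDAB _ hy
    refine ⟨a * (y - b * r), smul_mem_smul_set (?_ : y - b * r ∈ _), b * (y + a * r),
      smul_mem_smul_set (?_ : y + a * r ∈ _), by linear_combination y * hab⟩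
    · simpa only [mem_preimage, hL, sub_smul, ← add_sub_assoc, mul_smul] using hrA
    · simpa only [mem_preimage, hL, add_smul, ← add_assoc, mul_smul] using hrB
  have : (ν.map L).IsAddHaarMeasure := L.isAddHaarMeasure_map ν
  rw [isAddLeftInvariant_eq_smul μ (ν.map L)]
  simp only [Measure.smul_apply, ENNReal.smul_def, smul_eq_mul]
  calc _ ≤ (addHaarScalarFactor μ (ν.map L) : ENNReal) *
        (ENNReal.ofReal a * ν.map L A + ENNReal.ofReal b * ν.map L B) := by gcongr
    _ = _ := by ring

theorem convexOn_univ_toReal_of_le {E : Type*} [AddCommGroup E] [Module ℝ E]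
    {f : E → ENNReal} (hf : ∀ x, f x ≠ ⊤)
    (h : ∀ x y (a b : ℝ), 0 ≤ a → 0 ≤ b → a + b = 1 →
      f (a • x + b • y) ≤ ENNReal.ofReal a * f x + ENNReal.ofReal b * f y) :
    ConvexOn ℝ univ fun x => (f x).toReal := by
  refine ⟨convex_univ, fun x _ y _ a b ha hb hab => ?_⟩
  have hx : ENNReal.ofReal a * f x ≠ ⊤ := ENNReal.mul_ne_top ENNReal.ofReal_ne_top (hf x)
  have hy : ENNReal.ofReal b * f y ≠ ⊤ := ENNReal.mul_ne_top ENNReal.ofReal_ne_top (hf y)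
  have := ENNReal.toReal_mono (ENNReal.add_ne_top.2 ⟨hx, hy⟩) (h x y a b ha hb hab)
  rwa [ENNReal.toReal_add hx hy, ENNReal.toReal_mul, ENNReal.toReal_mul,
    ENNReal.toReal_ofReal ha, ENNReal.toReal_ofReal hb] at this

theorem convexOn_addHaar_convexHull_union_image_add {E : Type*} [NormedAddCommGroup E]
    [NormedSpace ℝ E] [FiniteDimensional ℝ E] [MeasurableSpace E] [BorelSpace E]
    (μ : Measure E) [μ.IsAddHaarMeasure] {K K' : Set E} (hK : IsCompact K)
    (hKc : Convex ℝ K) (hK' : IsCompact K') (hK'c : Convex ℝ K') :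
    ConvexOn ℝ univ fun w => (μ (convexHull ℝ (K ∪ (fun x => x + w) '' K'))).toReal := by
  have hcompact (w : E) : IsCompact (convexHull ℝ (K ∪ (fun x => x + w) '' K')) :=
    hK.convexHull_union (hK'.image (continuous_add_const w)) hKc
      (by simpa only [add_comm] using hK'c.translate w)
  refine convexOn_univ_toReal_of_le (fun w => (hcompact w).measure_lt_top.ne)
    fun w₁ w₂ a b ha hb hab => ?_
  rcases eq_or_ne w₁ w₂ with rfl | hne
  · rw [← add_smul, hab, one_smul, ← add_mul, ← ENNReal.ofReal_add ha hb, hab,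
      ENNReal.ofReal_one, one_mul]
  exact addHaar_le_of_forall_exists_sub_smul_mem μ (sub_ne_zero.2 hne.symm)
    (hcompact _).measurableSet (hcompact w₁) (convex_convexHull ℝ _) (hcompact w₂)
    (convex_convexHull ℝ _) ha hb hab
    fun z hz => exists_sub_smul_mem_convexHull_union_image_add K K' w₁ w₂ hab hz

/-- For fixed convex bodies `K` and `K'` in the plane, the area of the convex hull
of `K ∪ (K' + w)` is a convex function of the translation vector `w`. -/
theorem stmt_4 (K K' : Set (EuclideanSpace ℝ (Fin 2)))
    (hK : IsCompact K) (hKc : Convex ℝ K)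
    (hK' : IsCompact K') (hK'c : Convex ℝ K') :
    ConvexOn ℝ Set.univ (fun w : EuclideanSpace ℝ (Fin 2) =>
      (volume (convexHull ℝ (K ∪ (fun x => x + w) '' K'))).toReal) :=
  convexOn_addHaar_convexHull_union_image_add volume hK hKc hK' hK'c
end

section
/- The diameter of the union of the circle of radius 1/(2π) centered at the origin and the axis-aligned rectangle with center (0.0741, 0.0976) and side lengths 0.3273 (horizontal) × 0.1727 (vertical) is less than 0.45976. -/
open Metric

lemma euc_dist_le (x y : EuclideanSpace ℝ (Fin 2)) (b : ℝ) (hb : 0 ≤ b)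
    (h : (x 0 - y 0)^2 + (x 1 - y 1)^2 ≤ b^2) : dist x y ≤ b := by
  rw [EuclideanSpace.dist_eq, Fin.sum_univ_two]
  calc Real.sqrt (dist (x 0) (y 0) ^ 2 + dist (x 1) (y 1) ^ 2)
      ≤ Real.sqrt (b^2) := by
        apply Real.sqrt_le_sqrt
        simp only [Real.dist_eq, sq_abs]
        exact h
    _ = b := Real.sqrt_sq hb

/-- The diameter of the union of the circle of radius `1/(2π)` centered at the origin
and the axis-aligned rectangle with center `(0.0741, 0.0976)` and side lengths
`0.3273 × 0.1727` is less than `0.45976`. -/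
theorem stmt_8 :
    Metric.diam
      ((sphere (0 : EuclideanSpace ℝ (Fin 2)) (1 / (2 * Real.pi))) ∪
        {p : EuclideanSpace ℝ (Fin 2) |
          p 0 ∈ Set.Icc (0.0741 - 0.3273 / 2) (0.0741 + 0.3273 / 2) ∧
          p 1 ∈ Set.Icc (0.0976 - 0.1727 / 2) (0.0976 + 0.1727 / 2)}) < 0.45976 := by
  have hπ := Real.pi_gt_d6
  have hrc : 1 / (2 * Real.pi) ≤ 0.1591550 := by
    rw [div_le_iff₀ (by linarith)]
    nlinarith
  have hsph : ∀ x : EuclideanSpace ℝ (Fin 2),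
      x ∈ sphere (0 : EuclideanSpace ℝ (Fin 2)) (1 / (2 * Real.pi)) →
      dist x 0 ≤ 0.1591550 := by
    intro x hx
    rw [mem_sphere] at hx
    linarith [hx.le]
  have hrect : ∀ x : EuclideanSpace ℝ (Fin 2),
      x ∈ {p : EuclideanSpace ℝ (Fin 2) |
          p 0 ∈ Set.Icc (0.0741 - 0.3273 / 2) (0.0741 + 0.3273 / 2) ∧
          p 1 ∈ Set.Icc (0.0976 - 0.1727 / 2) (0.0976 + 0.1727 / 2)} →
      dist x 0 ≤ 0.3006039 := by
    intro x ⟨⟨h1, h2⟩, ⟨h3, h4⟩⟩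
    apply euc_dist_le _ _ _ (by norm_num)
    have z0 : (0 : EuclideanSpace ℝ (Fin 2)) 0 = 0 := rfl
    have z1 : (0 : EuclideanSpace ℝ (Fin 2)) 1 = 0 := rfl
    rw [z0, z1]
    nlinarith [sq_nonneg (x 0 - 0.0741), sq_nonneg (x 1 - 0.0976)]
  have hdiam : Metric.diam
      ((sphere (0 : EuclideanSpace ℝ (Fin 2)) (1 / (2 * Real.pi))) ∪
        {p : EuclideanSpace ℝ (Fin 2) |
          p 0 ∈ Set.Icc (0.0741 - 0.3273 / 2) (0.0741 + 0.3273 / 2) ∧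
          p 1 ∈ Set.Icc (0.0976 - 0.1727 / 2) (0.0976 + 0.1727 / 2)}) ≤ 0.4597589 := by
    apply Metric.diam_le_of_forall_dist_le (by norm_num)
    rintro x (hx | hx) y (hy | hy)
    · calc dist x y ≤ dist x 0 + dist 0 y := dist_triangle _ _ _
        _ = dist x 0 + dist y 0 := by rw [dist_comm 0 y]
        _ ≤ 0.1591550 + 0.1591550 := add_le_add (hsph x hx) (hsph y hy)
        _ ≤ 0.4597589 := by norm_num
    · calc dist x y ≤ dist x 0 + dist 0 y := dist_triangle _ _ _
        _ = dist x 0 + dist y 0 := by rw [dist_comm 0 y]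
        _ ≤ 0.1591550 + 0.3006039 := add_le_add (hsph x hx) (hrect y hy)
        _ ≤ 0.4597589 := by norm_num
    · calc dist x y ≤ dist x 0 + dist 0 y := dist_triangle _ _ _
        _ = dist x 0 + dist y 0 := by rw [dist_comm 0 y]
        _ ≤ 0.3006039 + 0.1591550 := add_le_add (hrect x hx) (hsph y hy)
        _ ≤ 0.4597589 := by norm_num
    · obtain ⟨⟨h1, h2⟩, ⟨h3, h4⟩⟩ := hx
      obtain ⟨⟨h5, h6⟩, ⟨h7, h8⟩⟩ := hy
      have : dist x y ≤ 0.3700684 := by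
        apply euc_dist_le _ _ _ (by norm_num)
        nlinarith [sq_nonneg (x 0 - y 0), sq_nonneg (x 1 - y 1)]
      linarith
  calc Metric.diam _ ≤ (0.4597589 : ℝ) := hdiam
    _ < 0.45976 := by norm_num
end
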